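/- If c-vectors are sign coherent and (i_1,...,i_l) is a maximal green sequence for a 3×3 skew-symmetrizable matrix B whose diagram is mutation-acyclic, then the diagram of some intermediate matrix B_j = μ_{i_j}∘···∘μ_{i_1}(B) (for some 0 ≤ j ≤ l, with B_0 = B) is acyclic. -/
import Mathlib


open Matrix BigOperators

/-- Matrix mutation in direction `k`. -/
def mutate {n : ℕ} (B : Matrix (Fin n) (Fin n) ℤ) (k : Fin n) : Matrix (Fin n) (Fin n) ℤ :=
  fun i j =>
    if i = k ∨ j = k then -B i j
    else B i j + max (B i k) 0 * max (B k j) 0 - max (-B i k) 0 * max (-B k j) 0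

/-- A vector is sign coherent: nonzero and entrywise nonnegative or entrywise nonpositive. -/
def signCoherent {n : ℕ} (c : Fin n → ℤ) : Prop :=
  c ≠ 0 ∧ ((∀ j, 0 ≤ c j) ∨ (∀ j, c j ≤ 0))

/-- The sign of a sign-coherent vector. -/
def sgn {n : ℕ} (c : Fin n → ℤ) : ℤ :=
  if ∀ j, 0 ≤ c j then 1 else -1

/-- Mutation of the tuple of c-vectors. -/
def cmut {n : ℕ} (B : Matrix (Fin n) (Fin n) ℤ) (k : Fin n)
    (c : Fin n → Fin n → ℤ) : Fin n → Fin n → ℤ :=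
  fun i => if i = k then -c k else c i + max (sgn (c k) * B k i) 0 • c k

/-- Y-seed mutation on a pair (c, B). -/
def ymut {n : ℕ} (s : (Fin n → Fin n → ℤ) × Matrix (Fin n) (Fin n) ℤ) (k : Fin n) :
    (Fin n → Fin n → ℤ) × Matrix (Fin n) (Fin n) ℤ :=
  (cmut s.2 k s.1, mutate s.2 k)

/-- `d` is a skew-symmetrizer of `B`. -/
def skewSymmetrizer {n : ℕ} (d : Fin n → ℤ) (B : Matrix (Fin n) (Fin n) ℤ) : Prop :=
  (∀ i, 0 < d i) ∧ ∀ i j, d i * B i j = -(d j * B j i)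

/-- The diagram of a 3×3 matrix is cyclic: all of B₂₁, B₃₂, B₁₃ are nonzero with equal signs. -/
def isCyclic (B : Matrix (Fin 3) (Fin 3) ℤ) : Prop :=
  (0 < B 1 0 ∧ 0 < B 2 1 ∧ 0 < B 0 2) ∨ (B 1 0 < 0 ∧ B 2 1 < 0 ∧ B 0 2 < 0)

/-- The radical vector (d₂|B₂₃|, d₃|B₃₁|, d₁|B₁₂|) for a cyclic 3×3 matrix. -/
def ucyc (B : Matrix (Fin 3) (Fin 3) ℤ) (d : Fin 3 → ℤ) : Fin 3 → ℤ :=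
  ![d 1 * |B 1 2|, d 2 * |B 2 0|, d 0 * |B 0 1|]

/-- `s` is a source of the diagram of `B`: no edges point into `s`. -/
def isSource (B : Matrix (Fin 3) (Fin 3) ℤ) (s : Fin 3) : Prop := ∀ i, i ≠ s → B s i ≤ 0

/-- `t` is a sink of the diagram of `B`: no edges point out of `t`. -/
def isSink (B : Matrix (Fin 3) (Fin 3) ℤ) (t : Fin 3) : Prop := ∀ i, i ≠ t → 0 ≤ B t i

/-- The standard basis of ℤ^n as a tuple of c-vectors. -/
def stdc (n : ℕ) : Fin n → Fin n → ℤ := fun i j => if i = j then 1 else 0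

lemma skew_diag {n : ℕ} {d : Fin n → ℤ} {B : Matrix (Fin n) (Fin n) ℤ}
    (hd : skewSymmetrizer d B) (i : Fin n) : B i i = 0 := by
  have h := hd.2 i i
  have h2 := hd.1 i
  nlinarith [sq_nonneg (B i i)]

lemma skew_flip {n : ℕ} {d : Fin n → ℤ} {B : Matrix (Fin n) (Fin n) ℤ}
    (hd : skewSymmetrizer d B) {i j : Fin n} (h : 0 < B i j) : B j i < 0 := by
  have h1 := hd.2 i j
  have h2 := hd.1 i
  have h3 := hd.1 j
  nlinarith

lemma skew_flip' {n : ℕ} {d : Fin n → ℤ} {B : Matrix (Fin n) (Fin n) ℤ}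
    (hd : skewSymmetrizer d B) {i j : Fin n} (h : B i j < 0) : 0 < B j i := by
  have h1 := hd.2 i j
  have h2 := hd.1 i
  have h3 := hd.1 j
  nlinarith

lemma skew_max {n : ℕ} {d : Fin n → ℤ} {B : Matrix (Fin n) (Fin n) ℤ}
    (hd : skewSymmetrizer d B) (a b : Fin n) :
    d a * max (B a b) 0 = d b * max (-B b a) 0 := by
  have h1 := hd.2 a b
  have h2 := hd.1 a
  have h3 := hd.1 b
  rcases le_or_gt (B a b) 0 with h | h
  · rw [max_eq_right h, max_eq_right]
    · ring
    · nlinarith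
  · rw [max_eq_left h.le, max_eq_left]
    · linarith
    · nlinarith [skew_flip hd h]

lemma skew_mutate {n : ℕ} {d : Fin n → ℤ} {B : Matrix (Fin n) (Fin n) ℤ}
    (hd : skewSymmetrizer d B) (k : Fin n) : skewSymmetrizer d (mutate B k) := by
  refine ⟨hd.1, fun i j => ?_⟩
  by_cases hik : i = k
  · by_cases hjk : j = k
    · simp [mutate, hik, hjk, skew_diag hd]
    · simp only [mutate, hik, true_or, or_true, if_pos]
      have := hd.2 k j
      ring_nf
      linarith
  · by_cases hjk : j = k
    · simp only [mutate, hjk, true_or, or_true, if_pos]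
      have := hd.2 i k
      ring_nf
      linarith
    · simp only [mutate, hik, hjk, or_self, if_neg, not_false_iff]
      have e1 := skew_max hd i k
      have e2 := skew_max hd k i
      have e3 := skew_max hd j k
      have e4 := skew_max hd k j
      have h0 := hd.2 i j
      linear_combination h0 + max (B k j) 0 * e1 + max (-B k j) 0 * e2 + max (B k i) 0 * e3 + max (-B k i) 0 * e4

lemma skew_foldl {d : Fin 3 → ℤ} (L : List (Fin 3)) {B : Matrix (Fin 3) (Fin 3) ℤ}
    (hd : skewSymmetrizer d B) : skewSymmetrizer d (L.foldl mutate B) := by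
  induction L generalizing B with
  | nil => exact hd
  | cons a t ih => exact ih (skew_mutate hd a)

lemma ucyc_pos {d : Fin 3 → ℤ} {B : Matrix (Fin 3) (Fin 3) ℤ}
    (hd : skewSymmetrizer d B) (h : isCyclic B) (i : Fin 3) : 0 < ucyc B d i := by
  have h12 : B 1 2 ≠ 0 := by
    rcases h with ⟨_, h21, _⟩ | ⟨_, h21, _⟩
    · exact ne_of_lt (skew_flip hd h21)
    · exact ne_of_gt (skew_flip' hd h21)
  have h20 : B 2 0 ≠ 0 := by
    rcases h with ⟨_, _, h02⟩ | ⟨_, _, h02⟩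
    · exact ne_of_lt (skew_flip hd h02)
    · exact ne_of_gt (skew_flip' hd h02)
  have h01 : B 0 1 ≠ 0 := by
    rcases h with ⟨h10, _, _⟩ | ⟨h10, _, _⟩
    · exact ne_of_lt (skew_flip hd h10)
    · exact ne_of_gt (skew_flip' hd h10)
  fin_cases i
  · exact mul_pos (hd.1 1) (abs_pos.2 h12)
  · exact mul_pos (hd.1 2) (abs_pos.2 h20)
  · exact mul_pos (hd.1 0) (abs_pos.2 h01)

lemma step0 (B : Matrix (Fin 3) (Fin 3) ℤ) (d : Fin 3 → ℤ) (hd : skewSymmetrizer d B)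
    (h1 : isCyclic B) (h2 : isCyclic (mutate B 0))
    (c : Fin 3 → Fin 3 → ℤ) (hc : ∀ m, 0 ≤ c 0 m) (m : Fin 3) :
    ∑ i, ucyc (mutate B 0) d i * cmut B 0 c i m = ∑ i, ucyc B d i * c i m := by
  have hsgn : sgn (c 0) = 1 := if_pos hc
  simp only [isCyclic, mutate,
    show ((0:Fin 3) = 0) = True from by simp,
    show ((1:Fin 3) = 0) = False from by simp,
    show ((2:Fin 3) = 0) = False from by simp,
    if_true, if_false, or_false, false_or, or_true, true_or, or_self] at h2
  rcases h1 with ⟨hB10, hB21, hB02⟩ | ⟨hB10, hB21, hB02⟩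
  · have h01 : B 0 1 < 0 := skew_flip hd hB10
    have h12 : B 1 2 < 0 := skew_flip hd hB21
    have h20 : B 2 0 < 0 := skew_flip hd hB02
    rcases h2 with ⟨h, _, _⟩ | ⟨_, h21, _⟩
    · linarith
    rw [max_eq_right h20.le, max_eq_right h01.le,
      max_eq_left (by linarith : (0:ℤ) ≤ -B 2 0),
      max_eq_left (by linarith : (0:ℤ) ≤ -B 0 1)] at h21
    have key : 0 < B 1 2 + B 1 0 * B 0 2 := by
      have e : d 1 * (B 1 2 + B 1 0 * B 0 2)
          = -(d 2 * (B 2 1 + 0 * 0 - -B 2 0 * -B 0 1)) := by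
        linear_combination hd.2 1 2 - B 0 1 * hd.2 2 0 + B 0 2 * hd.2 0 1
      nlinarith [hd.1 1, hd.1 2]
    simp only [Fin.sum_univ_three, ucyc, cmut, mutate, hsgn, one_mul,
      Matrix.cons_val_zero, Matrix.cons_val_one, Matrix.head_cons,
      Matrix.cons_val_two, Matrix.tail_cons,
      show ((0:Fin 3) = 0) = True from by simp,
      show ((1:Fin 3) = 0) = False from by simp,
      show ((2:Fin 3) = 0) = False from by simp,
      if_true, if_false, or_false, false_or, or_true, true_or,
      Pi.smul_apply, smul_eq_mul, Pi.add_apply, Pi.neg_apply]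
    rw [max_eq_left hB10.le, max_eq_left hB02.le,
      max_eq_right (by linarith : -B 1 0 ≤ (0:ℤ)),
      max_eq_right (by linarith : -B 0 2 ≤ (0:ℤ)),
      max_eq_right h01.le,
      abs_neg, abs_neg, abs_of_neg h12, abs_of_neg h20, abs_of_neg h01,
      abs_of_pos (show (0:ℤ) < B 1 2 + B 1 0 * B 0 2 - 0 * 0 by linarith)]
    linear_combination (-(c 0 m) * B 0 2) * hd.2 0 1
  · have h01 : 0 < B 0 1 := skew_flip' hd hB10
    have h12 : 0 < B 1 2 := skew_flip' hd hB21
    have h20 : 0 < B 2 0 := skew_flip' hd hB02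
    rcases h2 with ⟨_, h21, _⟩ | ⟨h, _, _⟩
    swap
    · linarith
    rw [max_eq_left h20.le, max_eq_left h01.le,
      max_eq_right (by linarith : -B 2 0 ≤ (0:ℤ)),
      max_eq_right (by linarith : -B 0 1 ≤ (0:ℤ))] at h21
    have key : B 1 2 + 0 * 0 - -B 1 0 * -B 0 2 < 0 := by
      have e : d 1 * (B 1 2 + 0 * 0 - -B 1 0 * -B 0 2)
          = -(d 2 * (B 2 1 + B 2 0 * B 0 1 - 0 * 0)) := by
        linear_combination hd.2 1 2 + B 0 1 * hd.2 2 0 - B 0 2 * hd.2 0 1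
      nlinarith [hd.1 1, hd.1 2]
    simp only [Fin.sum_univ_three, ucyc, cmut, mutate, hsgn, one_mul,
      Matrix.cons_val_zero, Matrix.cons_val_one, Matrix.head_cons,
      Matrix.cons_val_two, Matrix.tail_cons,
      show ((0:Fin 3) = 0) = True from by simp,
      show ((1:Fin 3) = 0) = False from by simp,
      show ((2:Fin 3) = 0) = False from by simp,
      if_true, if_false, or_false, false_or, or_true, true_or,
      Pi.smul_apply, smul_eq_mul, Pi.add_apply, Pi.neg_apply]
    rw [max_eq_right hB10.le, max_eq_right hB02.le,
      max_eq_left (by linarith : (0:ℤ) ≤ -B 1 0),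
      max_eq_left (by linarith : (0:ℤ) ≤ -B 0 2),
      max_eq_left h01.le,
      abs_neg, abs_neg, abs_of_pos h12, abs_of_pos h20, abs_of_pos h01,
      abs_of_neg key]
    linear_combination (-(c 0 m) * B 0 2) * hd.2 0 1 + (c 0 m * B 0 1) * hd.2 2 0

lemma step1 (B : Matrix (Fin 3) (Fin 3) ℤ) (d : Fin 3 → ℤ) (hd : skewSymmetrizer d B)
    (h1 : isCyclic B) (h2 : isCyclic (mutate B 1))
    (c : Fin 3 → Fin 3 → ℤ) (hc : ∀ m, 0 ≤ c 1 m) (m : Fin 3) :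
    ∑ i, ucyc (mutate B 1) d i * cmut B 1 c i m = ∑ i, ucyc B d i * c i m := by
  have hsgn : sgn (c 1) = 1 := if_pos hc
  simp only [isCyclic, mutate,
    show ((0:Fin 3) = 1) = False from by simp,
    show ((1:Fin 3) = 1) = True from by simp,
    show ((2:Fin 3) = 1) = False from by simp,
    if_true, if_false, or_false, false_or, or_true, true_or, or_self] at h2
  rcases h1 with ⟨hB10, hB21, hB02⟩ | ⟨hB10, hB21, hB02⟩
  · have h01 : B 0 1 < 0 := skew_flip hd hB10
    have h12 : B 1 2 < 0 := skew_flip hd hB21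
    have h20 : B 2 0 < 0 := skew_flip hd hB02
    rcases h2 with ⟨h, _, _⟩ | ⟨_, _, h02⟩
    · linarith
    rw [max_eq_right h01.le, max_eq_right h12.le,
      max_eq_left (by linarith : (0:ℤ) ≤ -B 0 1),
      max_eq_left (by linarith : (0:ℤ) ≤ -B 1 2)] at h02
    have key : 0 < B 2 0 + B 2 1 * B 1 0 := by
      have e : d 2 * (B 2 0 + B 2 1 * B 1 0)
          = -(d 0 * (B 0 2 + 0 * 0 - -B 0 1 * -B 1 2)) := by
        linear_combination hd.2 2 0 + B 1 0 * hd.2 2 1 - B 1 2 * hd.2 0 1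
      nlinarith [hd.1 2, hd.1 0]
    simp only [Fin.sum_univ_three, ucyc, cmut, mutate, hsgn, one_mul,
      Matrix.cons_val_zero, Matrix.cons_val_one, Matrix.head_cons,
      Matrix.cons_val_two, Matrix.tail_cons,
      show ((0:Fin 3) = 1) = False from by simp,
      show ((1:Fin 3) = 1) = True from by simp,
      show ((2:Fin 3) = 1) = False from by simp,
      if_true, if_false, or_false, false_or, or_true, true_or,
      Pi.smul_apply, smul_eq_mul, Pi.add_apply, Pi.neg_apply]
    rw [max_eq_left hB21.le, max_eq_left hB10.le,
      max_eq_right (by linarith : -B 2 1 ≤ (0:ℤ)),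
      max_eq_right (by linarith : -B 1 0 ≤ (0:ℤ)),
      max_eq_right h12.le,
      abs_neg, abs_neg, abs_of_neg h12, abs_of_neg h20, abs_of_neg h01,
      abs_of_pos (show (0:ℤ) < B 2 0 + B 2 1 * B 1 0 - 0 * 0 by linarith)]
    linear_combination (-(c 1 m) * B 1 0) * hd.2 2 1
  · have h01 : 0 < B 0 1 := skew_flip' hd hB10
    have h12 : 0 < B 1 2 := skew_flip' hd hB21
    have h20 : 0 < B 2 0 := skew_flip' hd hB02
    rcases h2 with ⟨_, _, h02⟩ | ⟨h, _, _⟩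
    swap
    · linarith
    rw [max_eq_left h01.le, max_eq_left h12.le,
      max_eq_right (by linarith : -B 0 1 ≤ (0:ℤ)),
      max_eq_right (by linarith : -B 1 2 ≤ (0:ℤ))] at h02
    have key : B 2 0 + 0 * 0 - -B 2 1 * -B 1 0 < 0 := by
      have e : d 2 * (B 2 0 + 0 * 0 - -B 2 1 * -B 1 0)
          = -(d 0 * (B 0 2 + B 0 1 * B 1 2 - 0 * 0)) := by
        linear_combination hd.2 2 0 - B 1 0 * hd.2 2 1 + B 1 2 * hd.2 0 1
      nlinarith [hd.1 2, hd.1 0]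
    simp only [Fin.sum_univ_three, ucyc, cmut, mutate, hsgn, one_mul,
      Matrix.cons_val_zero, Matrix.cons_val_one, Matrix.head_cons,
      Matrix.cons_val_two, Matrix.tail_cons,
      show ((0:Fin 3) = 1) = False from by simp,
      show ((1:Fin 3) = 1) = True from by simp,
      show ((2:Fin 3) = 1) = False from by simp,
      if_true, if_false, or_false, false_or, or_true, true_or,
      Pi.smul_apply, smul_eq_mul, Pi.add_apply, Pi.neg_apply]
    rw [max_eq_right hB21.le, max_eq_right hB10.le,
      max_eq_left (by linarith : (0:ℤ) ≤ -B 2 1),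
      max_eq_left (by linarith : (0:ℤ) ≤ -B 1 0),
      max_eq_left h12.le,
      abs_neg, abs_neg, abs_of_pos h12, abs_of_pos h20, abs_of_pos h01,
      abs_of_neg key]
    linear_combination (c 1 m * B 1 2) * hd.2 0 1 - (c 1 m * B 1 0) * hd.2 1 2

lemma step2 (B : Matrix (Fin 3) (Fin 3) ℤ) (d : Fin 3 → ℤ) (hd : skewSymmetrizer d B)
    (h1 : isCyclic B) (h2 : isCyclic (mutate B 2))
    (c : Fin 3 → Fin 3 → ℤ) (hc : ∀ m, 0 ≤ c 2 m) (m : Fin 3) :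
    ∑ i, ucyc (mutate B 2) d i * cmut B 2 c i m = ∑ i, ucyc B d i * c i m := by
  have hsgn : sgn (c 2) = 1 := if_pos hc
  simp only [isCyclic, mutate,
    show ((0:Fin 3) = 2) = False from by simp,
    show ((1:Fin 3) = 2) = False from by simp,
    show ((2:Fin 3) = 2) = True from by simp,
    if_true, if_false, or_false, false_or, or_true, true_or, or_self] at h2
  rcases h1 with ⟨hB10, hB21, hB02⟩ | ⟨hB10, hB21, hB02⟩
  · have h01 : B 0 1 < 0 := skew_flip hd hB10
    have h12 : B 1 2 < 0 := skew_flip hd hB21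
    have h20 : B 2 0 < 0 := skew_flip hd hB02
    rcases h2 with ⟨_, h, _⟩ | ⟨h10, _, _⟩
    · linarith
    rw [max_eq_right h12.le, max_eq_right h20.le,
      max_eq_left (by linarith : (0:ℤ) ≤ -B 1 2),
      max_eq_left (by linarith : (0:ℤ) ≤ -B 2 0)] at h10
    have key : 0 < B 0 1 + B 0 2 * B 2 1 := by
      have e : d 0 * (B 0 1 + B 0 2 * B 2 1)
          = -(d 1 * (B 1 0 + 0 * 0 - -B 1 2 * -B 2 0)) := by
        linear_combination hd.2 0 1 + B 2 1 * hd.2 0 2 - B 2 0 * hd.2 1 2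
      nlinarith [hd.1 0, hd.1 1]
    simp only [Fin.sum_univ_three, ucyc, cmut, mutate, hsgn, one_mul,
      Matrix.cons_val_zero, Matrix.cons_val_one, Matrix.head_cons,
      Matrix.cons_val_two, Matrix.tail_cons,
      show ((0:Fin 3) = 2) = False from by simp,
      show ((1:Fin 3) = 2) = False from by simp,
      show ((2:Fin 3) = 2) = True from by simp,
      if_true, if_false, or_false, false_or, or_true, true_or,
      Pi.smul_apply, smul_eq_mul, Pi.add_apply, Pi.neg_apply]
    rw [max_eq_left hB02.le, max_eq_left hB21.le,
      max_eq_right (by linarith : -B 0 2 ≤ (0:ℤ)),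
      max_eq_right (by linarith : -B 2 1 ≤ (0:ℤ)),
      max_eq_right h20.le,
      abs_neg, abs_neg, abs_of_neg h12, abs_of_neg h20, abs_of_neg h01,
      abs_of_pos (show (0:ℤ) < B 0 1 + B 0 2 * B 2 1 - 0 * 0 by linarith)]
    linear_combination (-(c 2 m) * B 2 1) * hd.2 0 2
  · have h01 : 0 < B 0 1 := skew_flip' hd hB10
    have h12 : 0 < B 1 2 := skew_flip' hd hB21
    have h20 : 0 < B 2 0 := skew_flip' hd hB02
    rcases h2 with ⟨h10, _, _⟩ | ⟨_, h, _⟩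
    swap
    · linarith
    rw [max_eq_left h12.le, max_eq_left h20.le,
      max_eq_right (by linarith : -B 1 2 ≤ (0:ℤ)),
      max_eq_right (by linarith : -B 2 0 ≤ (0:ℤ))] at h10
    have key : B 0 1 + 0 * 0 - -B 0 2 * -B 2 1 < 0 := by
      have e : d 0 * (B 0 1 + 0 * 0 - -B 0 2 * -B 2 1)
          = -(d 1 * (B 1 0 + B 1 2 * B 2 0 - 0 * 0)) := by
        linear_combination hd.2 0 1 - B 2 1 * hd.2 0 2 + B 2 0 * hd.2 1 2
      nlinarith [hd.1 0, hd.1 1]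
    simp only [Fin.sum_univ_three, ucyc, cmut, mutate, hsgn, one_mul,
      Matrix.cons_val_zero, Matrix.cons_val_one, Matrix.head_cons,
      Matrix.cons_val_two, Matrix.tail_cons,
      show ((0:Fin 3) = 2) = False from by simp,
      show ((1:Fin 3) = 2) = False from by simp,
      show ((2:Fin 3) = 2) = True from by simp,
      if_true, if_false, or_false, false_or, or_true, true_or,
      Pi.smul_apply, smul_eq_mul, Pi.add_apply, Pi.neg_apply]
    rw [max_eq_right hB02.le, max_eq_right hB21.le,
      max_eq_left (by linarith : (0:ℤ) ≤ -B 0 2),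
      max_eq_left (by linarith : (0:ℤ) ≤ -B 2 1),
      max_eq_left h20.le,
      abs_neg, abs_neg, abs_of_pos h12, abs_of_pos h20, abs_of_pos h01,
      abs_of_neg key]
    linear_combination (c 2 m * B 2 0) * hd.2 1 2 - (c 2 m * B 2 1) * hd.2 2 0

lemma step (B : Matrix (Fin 3) (Fin 3) ℤ) (d : Fin 3 → ℤ) (hd : skewSymmetrizer d B)
    (a : Fin 3) (h1 : isCyclic B) (h2 : isCyclic (mutate B a))
    (c : Fin 3 → Fin 3 → ℤ) (hc : ∀ m, 0 ≤ c a m) (m : Fin 3) :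
    ∑ i, ucyc (mutate B a) d i * cmut B a c i m = ∑ i, ucyc B d i * c i m := by
  fin_cases a
  · exact step0 B d hd h1 h2 c hc m
  · exact step1 B d hd h1 h2 c hc m
  · exact step2 B d hd h1 h2 c hc m

lemma inv (d : Fin 3 → ℤ) (l : List (Fin 3)) :
    ∀ (B : Matrix (Fin 3) (Fin 3) ℤ) (c : Fin 3 → Fin 3 → ℤ),
    skewSymmetrizer d B →
    (∀ j ≤ l.length, isCyclic ((l.take j).foldl mutate B)) →
    (∀ j, (hj : j < l.length) →
      ∀ m, 0 ≤ ((l.take j).foldl ymut (c, B)).1 (l.get ⟨j, hj⟩) m) →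
    ∀ m, ∑ i, ucyc (l.foldl mutate B) d i * (l.foldl ymut (c, B)).1 i m
      = ∑ i, ucyc B d i * c i m := by
  induction l with
  | nil => intro B c _ _ _ m; simp
  | cons a t ih =>
    intro B c hd hcyc hgr m
    have hB : isCyclic B := by simpa using hcyc 0 (by simp)
    have hB' : isCyclic (mutate B a) := by
      have := hcyc 1 (by simp)
      simpa using this
    have hc : ∀ m, 0 ≤ c a m := by
      have := hgr 0 (by simp)
      simpa using this
    have hfold : (a :: t).foldl ymut (c, B) = t.foldl ymut (cmut B a c, mutate B a) := by
      simp [ymut]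
    have hfoldm : (a :: t).foldl mutate B = t.foldl mutate (mutate B a) := by simp
    rw [hfold, hfoldm]
    rw [ih (mutate B a) (cmut B a c) (skew_mutate hd a)
      (fun j hj => by
        have := hcyc (j + 1) (by simpa using hj)
        simpa [List.take_succ_cons] using this)
      (fun j hj => by
        have := hgr (j + 1) (by simpa using hj)
        simpa [List.take_succ_cons, ymut] using this)]
    exact step B d hd a hB hB' c hc m

theorem mgs_reaches_acyclic (B : Matrix (Fin 3) (Fin 3) ℤ)
    (hB : ∃ d : Fin 3 → ℤ, skewSymmetrizer d B)
    (hma : ∃ L : List (Fin 3), ¬ isCyclic (L.foldl mutate B))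
    (l : List (Fin 3))
    (hsc : ∀ j ≤ l.length, ∀ i, signCoherent (((l.take j).foldl ymut (stdc 3, B)).1 i))
    (hgreen : ∀ j, (hj : j < l.length) →
      (∀ m, 0 ≤ ((l.take j).foldl ymut (stdc 3, B)).1 (l.get ⟨j, hj⟩) m) ∧
        ((l.take j).foldl ymut (stdc 3, B)).1 (l.get ⟨j, hj⟩) ≠ 0)
    (hmax : ∀ i, (∀ m, (l.foldl ymut (stdc 3, B)).1 i m ≤ 0) ∧
        (l.foldl ymut (stdc 3, B)).1 i ≠ 0) :
    ∃ j ≤ l.length, ¬ isCyclic ((l.take j).foldl mutate B) := by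
  by_contra hcon
  push_neg at hcon
  obtain ⟨d, hd⟩ := hB
  have hinv := inv d l B (stdc 3) hd hcon (fun j hj => (hgreen j hj).1) 0
  have hRHS : ∑ i, ucyc B d i * stdc 3 i 0 = ucyc B d 0 := by
    simp [stdc, Fin.sum_univ_three]
  rw [hRHS] at hinv
  have hBcyc : isCyclic B := by simpa using hcon 0 (by simp)
  have hu0 : 0 < ucyc B d 0 := ucyc_pos hd hBcyc 0
  have hLcyc : isCyclic (l.foldl mutate B) := by
    have := hcon l.length le_rfl
    simpa using this
  have hdL : skewSymmetrizer d (l.foldl mutate B) := skew_foldl l hd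
  have huL : ∀ i, 0 < ucyc (l.foldl mutate B) d i := ucyc_pos hdL hLcyc
  have hneg : ∀ i : Fin 3, (l.foldl ymut (stdc 3, B)).1 i 0 ≤ 0 := fun i => (hmax i).1 0
  have hterm : ∀ i : Fin 3,
      ucyc (l.foldl mutate B) d i * (l.foldl ymut (stdc 3, B)).1 i 0 ≤ 0 :=
    fun i => mul_nonpos_of_nonneg_of_nonpos (huL i).le (hneg i)
  rw [Fin.sum_univ_three] at hinv
  have := hterm 0; have := hterm 1; have := hterm 2
  linarith
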